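/- Let b > 1 be an integer and let s = σ + it with σ > 0 real. Then for every integer m ≥ 0: |c*_{m,b}(s)| ≤ (|(s+1)_m|/(σ+1)_m) · c*_{m,b}(σ) ≤ (Γ(σ+1)/|Γ(s+1)|) · c*_{m,b}(σ), where (z)_m = z(z+1)⋯(z+m−1) denotes the Pochhammer symbol and Γ is the Gamma function. -/

import Mathlib

open Finset

/-- γ_{j,b} = ∑_{a=1}^{b-1} a^j for a natural exponent j. -/
def gammaNat (b j : ℕ) : ℕ := ∑ a ∈ Finset.Ico 1 b, a ^ j

/-- The coefficients c*_{m,b}(s): c*_{0,b}(s) = 1 and, for m ≥ 1,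
c*_{m,b}(s) = (1/(b^{s+m} − b)) ∑_{j=1}^{m} [(s+m)⋯(s+m−j+1)/j!] γ_{j,b} c*_{m−j,b}(s). -/
noncomputable def cstarC (b : ℕ) (s : ℂ) : ℕ → ℂ
  | 0 => 1
  | (m + 1) =>
      (1 / ((b : ℂ) ^ (s + (m : ℂ) + 1) - (b : ℂ))) *
        ∑ j ∈ Finset.range (m + 1),
          ((∏ i ∈ Finset.range (j + 1), (s + (m : ℂ) + 1 - (i : ℂ))) / (Nat.factorial (j + 1) : ℂ))
            * (gammaNat b (j + 1) : ℂ) * cstarC b s (m - j)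
  decreasing_by exact Nat.lt_succ_of_le (Nat.sub_le m j)

/-- The coefficients c*_{m,b}(σ) for real σ (real-valued version of the same recurrence). -/
noncomputable def cstarR (b : ℕ) (σ : ℝ) : ℕ → ℝ
  | 0 => 1
  | (m + 1) =>
      (1 / ((b : ℝ) ^ (σ + (m : ℝ) + 1) - (b : ℝ))) *
        ∑ j ∈ Finset.range (m + 1),
          ((∏ i ∈ Finset.range (j + 1), (σ + (m : ℝ) + 1 - (i : ℝ))) / (Nat.factorial (j + 1) : ℝ))
            * (gammaNat b (j + 1) : ℝ) * cstarR b σ (m - j)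
  decreasing_by exact Nat.lt_succ_of_le (Nat.sub_le m j)


lemma prod_split {R : Type*} [CommRing R] (z : R) (m : ℕ) :
    ∀ j ≤ m, (∏ i ∈ Finset.range (j+1), (z + (m:R) + 1 - (i:R))) *
      ∏ k ∈ Finset.range (m - j), (z + 1 + (k:R)) =
    ∏ k ∈ Finset.range (m+1), (z + 1 + (k:R)) := by
  intro j
  induction j with
  | zero =>
    intro _
    rw [Finset.prod_range_succ, Finset.prod_range_zero, Nat.sub_zero]
    conv_rhs => rw [Finset.prod_range_succ]
    push_cast; ring
  | succ j ih =>
    intro hj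
    have hj' : j ≤ m := le_of_lt (Nat.lt_of_succ_le hj)
    have h1 : m - j = (m - (j+1)) + 1 := by omega
    have e1 : (∏ i ∈ Finset.range (j+1+1), (z + (m:R) + 1 - (i:R)))
        = (∏ i ∈ Finset.range (j+1), (z + (m:R) + 1 - (i:R))) * (z + (m:R) + 1 - ((j+1 : ℕ):R)) :=
      Finset.prod_range_succ _ (j+1)
    have e2 : (∏ k ∈ Finset.range (m - j), (z + 1 + (k:R)))
        = (∏ k ∈ Finset.range (m-(j+1)), (z + 1 + (k:R))) * (z + 1 + ((m-(j+1) : ℕ):R)) := by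
      rw [h1]; exact Finset.prod_range_succ _ _
    have hF : z + (m:R) + 1 - ((j+1 : ℕ):R) = z + 1 + ((m-(j+1) : ℕ):R) := by
      rw [Nat.cast_sub hj]; push_cast; ring
    rw [e1, ← ih hj', e2, hF]; ring

lemma complex_Gamma_prod (z : ℂ) (hz : 0 < z.re) (m : ℕ) :
    Complex.Gamma (z + m) = (∏ i ∈ Finset.range m, (z + (i:ℂ))) * Complex.Gamma z := by
  induction m with
  | zero => simp
  | succ m ih =>
    have hne : z + (m:ℂ) ≠ 0 := by
      intro h
      have : (z + (m:ℂ)).re = 0 := by rw [h]; simp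
      simp only [Complex.add_re, Complex.natCast_re] at this
      have : 0 < z.re + (m:ℝ) := by positivity
      linarith [congrArg id ‹(z + (m:ℂ)).re = 0›, this]
    have : z + ((m:ℂ) + 1) = (z + (m:ℂ)) + 1 := by ring
    rw [Nat.cast_add, Nat.cast_one, this, Complex.Gamma_add_one _ hne, ih,
      Finset.prod_range_succ]
    ring

lemma real_Gamma_prod (x : ℝ) (hx : 0 < x) (m : ℕ) :
    Real.Gamma (x + m) = (∏ i ∈ Finset.range m, (x + (i:ℝ))) * Real.Gamma x := by
  induction m with
  | zero => simp
  | succ m ih =>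
    have hne : x + (m:ℝ) ≠ 0 := by positivity
    have h2 : x + ((m:ℝ) + 1) = (x + (m:ℝ)) + 1 := by ring
    rw [Nat.cast_add, Nat.cast_one, h2, Real.Gamma_add_one hne, ih, Finset.prod_range_succ]
    ring

lemma norm_Gamma_le (z : ℂ) (hz : 0 < z.re) : ‖Complex.Gamma z‖ ≤ Real.Gamma z.re := by
  rw [Complex.Gamma_eq_integral hz, Real.Gamma_eq_integral hz, Complex.GammaIntegral]
  refine le_trans (MeasureTheory.norm_integral_le_integral_norm _) (le_of_eq ?_)
  refine MeasureTheory.setIntegral_congr_fun measurableSet_Ioi (fun x hx => ?_)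
  simp only [Set.mem_Ioi] at hx
  rw [norm_mul, Complex.norm_real, Real.norm_eq_abs, abs_of_pos (Real.exp_pos _),
    Complex.norm_cpow_eq_rpow_re_of_pos hx]
  simp [Complex.sub_re]

lemma base_pos (b : ℕ) (hb : 1 < b) (σ : ℝ) (hσ : 0 < σ) (m : ℕ) :
    (0:ℝ) < (b:ℝ) ^ (σ + (m:ℝ) + 1) - (b:ℝ) := by
  have hb1 : (1:ℝ) < (b:ℝ) := by exact_mod_cast hb
  have h1 : (1:ℝ) < σ + (m:ℝ) + 1 := by
    have : (0:ℝ) ≤ (m:ℝ) := Nat.cast_nonneg m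
    linarith
  have h := Real.rpow_lt_rpow_of_exponent_lt hb1 h1
  rw [Real.rpow_one] at h
  linarith

lemma cstarR_nonneg (b : ℕ) (hb : 1 < b) (σ : ℝ) (hσ : 0 < σ) : ∀ m, 0 ≤ cstarR b σ m := by
  intro m
  induction m using Nat.strong_induction_on with
  | _ m ih =>
    match m with
    | 0 => rw [cstarR]; norm_num
    | m + 1 =>
      rw [cstarR]
      apply mul_nonneg
      · exact le_of_lt (one_div_pos.mpr (base_pos b hb σ hσ m))
      · apply Finset.sum_nonneg
        intro j hj
        have hjm : j ≤ m := Nat.lt_succ_iff.mp (Finset.mem_range.mp hj)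
        apply mul_nonneg
        apply mul_nonneg
        · apply div_nonneg
          · apply Finset.prod_nonneg
            intro i hi
            have him : i ≤ m := le_trans (Nat.lt_succ_iff.mp (Finset.mem_range.mp hi)) hjm
            have : (i:ℝ) ≤ (m:ℝ) := by exact_mod_cast him
            linarith
          · positivity
        · positivity
        · exact ih (m - j) (Nat.lt_succ_of_le (Nat.sub_le m j))

section Claim1
variable (b : ℕ) (s : ℂ)

lemma claim1 (hb : 1 < b) (hs : 0 < s.re) : ∀ m : ℕ,
    ‖cstarC b s m‖ ≤
      (‖∏ i ∈ Finset.range m, (s + 1 + (i : ℂ))‖ / ∏ i ∈ Finset.range m, (s.re + 1 + (i : ℝ))) *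
        cstarR b s.re m := by
  intro m
  induction m using Nat.strong_induction_on with
  | _ m ih =>
    match m with
    | 0 => simp [cstarC, cstarR]
    | m + 1 =>
      set σ := s.re with hσdef
      have hσ : 0 < σ := hs
      have hb0 : (0:ℝ) < (b:ℝ) := by positivity
      -- notation
      set Pc : ℕ → ℂ := fun n => ∏ i ∈ Finset.range n, (s + 1 + (i : ℂ)) with hPc
      set Pr : ℕ → ℝ := fun n => ∏ i ∈ Finset.range n, (σ + 1 + (i : ℝ)) with hPr
      have hPrpos : ∀ n, 0 < Pr n := by
        intro n
        apply Finset.prod_pos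
        intro i _
        have : (0:ℝ) ≤ (i:ℝ) := Nat.cast_nonneg i
        linarith
      set K : ℝ := ‖Pc (m+1)‖ / Pr (m+1) with hK
      have hKnn : 0 ≤ K := div_nonneg (norm_nonneg _) (le_of_lt (hPrpos _))
      -- denominators
      set Bc : ℂ := (b : ℂ) ^ (s + (m : ℂ) + 1) - (b : ℂ) with hBc
      set Br : ℝ := (b : ℝ) ^ (σ + (m : ℝ) + 1) - (b : ℝ) with hBr
      have hBrpos : 0 < Br := base_pos b hb σ hσ m
      have hnormpow : ‖(b : ℂ) ^ (s + (m : ℂ) + 1)‖ = (b:ℝ) ^ (σ + (m:ℝ) + 1) := by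
        have hcast : ((b:ℕ):ℂ) = (((b:ℕ):ℝ):ℂ) := by norm_cast
        rw [hcast, Complex.norm_cpow_eq_rpow_re_of_pos hb0]
        congr 1
      have hBle : Br ≤ ‖Bc‖ := by
        have h1 := norm_sub_norm_le ((b : ℂ) ^ (s + (m : ℂ) + 1)) ((b:ℂ))
        rw [hnormpow, Complex.norm_natCast] at h1
        exact h1
      have hBcn : 0 < ‖Bc‖ := lt_of_lt_of_le hBrpos hBle
      -- per-term bound
      have hterm : ∀ j ∈ Finset.range (m+1),
          ‖((∏ i ∈ Finset.range (j + 1), (s + (m : ℂ) + 1 - (i : ℂ))) / (Nat.factorial (j + 1) : ℂ))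
            * (gammaNat b (j + 1) : ℂ) * cstarC b s (m - j)‖ ≤
          K * (((∏ i ∈ Finset.range (j + 1), (σ + (m : ℝ) + 1 - (i : ℝ))) / (Nat.factorial (j + 1) : ℝ))
            * (gammaNat b (j + 1) : ℝ) * cstarR b σ (m - j)) := by
        intro j hj
        have hjm : j ≤ m := Nat.lt_succ_iff.mp (Finset.mem_range.mp hj)
        set Pic : ℂ := ∏ i ∈ Finset.range (j + 1), (s + (m : ℂ) + 1 - (i : ℂ)) with hPic
        set Pir : ℝ := ∏ i ∈ Finset.range (j + 1), (σ + (m : ℝ) + 1 - (i : ℝ)) with hPir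
        have hPirpos : 0 < Pir := by
          apply Finset.prod_pos
          intro i hi
          have him : i ≤ m := le_trans (Nat.lt_succ_iff.mp (Finset.mem_range.mp hi)) hjm
          have : (i:ℝ) ≤ (m:ℝ) := by exact_mod_cast him
          linarith
        have e1 : ‖Pic‖ * ‖Pc (m-j)‖ = ‖Pc (m+1)‖ := by
          rw [← norm_mul]
          congr 1
          exact prod_split s m j hjm
        have e2 : Pir * Pr (m-j) = Pr (m+1) := prod_split σ m j hjm
        have hfpos : (0:ℝ) < (Nat.factorial (j+1) : ℝ) := by positivity
        have key : ‖Pic‖ * (‖Pc (m-j)‖ / Pr (m-j)) = K * Pir := by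
          rw [hK, ← e1, ← e2]
          field_simp
        have hγnn : (0:ℝ) ≤ (gammaNat b (j+1) : ℝ) := Nat.cast_nonneg _
        have hcRnn : 0 ≤ cstarR b σ (m - j) := cstarR_nonneg b hb σ hσ (m - j)
        have hih := ih (m - j) (Nat.lt_succ_of_le (Nat.sub_le m j))
        calc ‖Pic / (Nat.factorial (j + 1) : ℂ) * (gammaNat b (j + 1) : ℂ) * cstarC b s (m - j)‖
            = ‖Pic‖ / (Nat.factorial (j+1) : ℝ) * (gammaNat b (j+1) : ℝ) * ‖cstarC b s (m - j)‖ := by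
              rw [norm_mul, norm_mul, norm_div, Complex.norm_natCast, Complex.norm_natCast]
          _ ≤ ‖Pic‖ / (Nat.factorial (j+1) : ℝ) * (gammaNat b (j+1) : ℝ) *
                ((‖Pc (m-j)‖ / Pr (m-j)) * cstarR b σ (m - j)) := by
              apply mul_le_mul_of_nonneg_left hih
              positivity
          _ = (‖Pic‖ * (‖Pc (m-j)‖ / Pr (m-j))) *
                ((gammaNat b (j+1) : ℝ) * cstarR b σ (m - j) / (Nat.factorial (j+1) : ℝ)) := by
              ring
          _ = (K * Pir) *
                ((gammaNat b (j+1) : ℝ) * cstarR b σ (m - j) / (Nat.factorial (j+1) : ℝ)) := by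
              rw [key]
          _ = K * (Pir / (Nat.factorial (j + 1) : ℝ) * (gammaNat b (j + 1) : ℝ) * cstarR b σ (m - j)) := by
              ring
      -- assemble
      rw [cstarC, cstarR]
      have hsum_nonneg : 0 ≤ ∑ j ∈ Finset.range (m + 1),
          ((∏ i ∈ Finset.range (j + 1), (σ + (m : ℝ) + 1 - (i : ℝ))) / (Nat.factorial (j + 1) : ℝ))
            * (gammaNat b (j + 1) : ℝ) * cstarR b σ (m - j) := by
        apply Finset.sum_nonneg
        intro j hj
        have hjm : j ≤ m := Nat.lt_succ_iff.mp (Finset.mem_range.mp hj)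
        apply mul_nonneg (mul_nonneg (div_nonneg (Finset.prod_nonneg ?_) (by positivity)) (Nat.cast_nonneg _))
          (cstarR_nonneg b hb σ hσ _)
        intro i hi
        have him : i ≤ m := le_trans (Nat.lt_succ_iff.mp (Finset.mem_range.mp hi)) hjm
        have : (i:ℝ) ≤ (m:ℝ) := by exact_mod_cast him
        linarith
      calc ‖(1 / Bc) * ∑ j ∈ Finset.range (m + 1),
              ((∏ i ∈ Finset.range (j + 1), (s + (m : ℂ) + 1 - (i : ℂ))) / (Nat.factorial (j + 1) : ℂ))
                * (gammaNat b (j + 1) : ℂ) * cstarC b s (m - j)‖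
          = (1 / ‖Bc‖) * ‖∑ j ∈ Finset.range (m + 1),
              ((∏ i ∈ Finset.range (j + 1), (s + (m : ℂ) + 1 - (i : ℂ))) / (Nat.factorial (j + 1) : ℂ))
                * (gammaNat b (j + 1) : ℂ) * cstarC b s (m - j)‖ := by
            rw [norm_mul, norm_div, norm_one]
        _ ≤ (1 / Br) * ‖∑ j ∈ Finset.range (m + 1),
              ((∏ i ∈ Finset.range (j + 1), (s + (m : ℂ) + 1 - (i : ℂ))) / (Nat.factorial (j + 1) : ℂ))
                * (gammaNat b (j + 1) : ℂ) * cstarC b s (m - j)‖ := by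
            apply mul_le_mul_of_nonneg_right _ (norm_nonneg _)
            exact one_div_le_one_div_of_le hBrpos hBle
        _ ≤ (1 / Br) * ∑ j ∈ Finset.range (m + 1),
              ‖((∏ i ∈ Finset.range (j + 1), (s + (m : ℂ) + 1 - (i : ℂ))) / (Nat.factorial (j + 1) : ℂ))
                * (gammaNat b (j + 1) : ℂ) * cstarC b s (m - j)‖ := by
            apply mul_le_mul_of_nonneg_left (norm_sum_le _ _) (by positivity)
        _ ≤ (1 / Br) * ∑ j ∈ Finset.range (m + 1),
              K * (((∏ i ∈ Finset.range (j + 1), (σ + (m : ℝ) + 1 - (i : ℝ))) / (Nat.factorial (j + 1) : ℝ))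
                * (gammaNat b (j + 1) : ℝ) * cstarR b σ (m - j)) := by
            apply mul_le_mul_of_nonneg_left (Finset.sum_le_sum hterm) (by positivity)
        _ = K * ((1 / Br) * ∑ j ∈ Finset.range (m + 1),
              ((∏ i ∈ Finset.range (j + 1), (σ + (m : ℝ) + 1 - (i : ℝ))) / (Nat.factorial (j + 1) : ℝ))
                * (gammaNat b (j + 1) : ℝ) * cstarR b σ (m - j)) := by
            rw [← Finset.mul_sum]
            ring

end Claim1

/-- For b > 1 and s with σ = Re s > 0, for every m ≥ 0:
|c*_{m,b}(s)| ≤ (|(s+1)_m|/(σ+1)_m) · c*_{m,b}(σ) ≤ (Γ(σ+1)/|Γ(s+1)|) · c*_{m,b}(σ). -/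
theorem cstar_abs_le_pochhammer_le_gamma (b : ℕ) (hb : 1 < b) (s : ℂ) (hs : 0 < s.re) (m : ℕ) :
    ‖cstarC b s m‖ ≤
      (‖∏ i ∈ Finset.range m, (s + 1 + (i : ℂ))‖ / ∏ i ∈ Finset.range m, (s.re + 1 + (i : ℝ))) *
        cstarR b s.re m ∧
    (‖∏ i ∈ Finset.range m, (s + 1 + (i : ℂ))‖ / ∏ i ∈ Finset.range m, (s.re + 1 + (i : ℝ))) *
        cstarR b s.re m ≤
      (Real.Gamma (s.re + 1) / ‖Complex.Gamma (s + 1)‖) * cstarR b s.re m := by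
  refine ⟨claim1 b s hb hs m, ?_⟩
  apply mul_le_mul_of_nonneg_right _ (cstarR_nonneg b hb s.re hs m)
  set σ := s.re with hσdef
  have hσ : 0 < σ := hs
  have hre1 : 0 < (s + 1).re := by simp [Complex.add_re]; linarith
  have hG1 : Complex.Gamma (s + 1 + (m:ℂ)) =
      (∏ i ∈ Finset.range m, (s + 1 + (i:ℂ))) * Complex.Gamma (s + 1) :=
    complex_Gamma_prod (s + 1) hre1 m
  have hG2 : Real.Gamma (σ + 1 + (m:ℝ)) =
      (∏ i ∈ Finset.range m, (σ + 1 + (i:ℝ))) * Real.Gamma (σ + 1) :=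
    real_Gamma_prod (σ + 1) (by linarith) m
  have hrem : (s + 1 + (m:ℂ)).re = σ + 1 + (m:ℝ) := by simp [Complex.add_re]; exact hσdef.symm
  have hle : ‖Complex.Gamma (s + 1 + (m:ℂ))‖ ≤ Real.Gamma (σ + 1 + (m:ℝ)) := by
    have := norm_Gamma_le (s + 1 + (m:ℂ)) (by rw [hrem]; positivity)
    rwa [hrem] at this
  have hGs1 : 0 < ‖Complex.Gamma (s + 1)‖ :=
    norm_pos_iff.mpr (Complex.Gamma_ne_zero_of_re_pos hre1)
  have hPrpos : 0 < ∏ i ∈ Finset.range m, (σ + 1 + (i:ℝ)) := by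
    apply Finset.prod_pos
    intro i _
    have : (0:ℝ) ≤ (i:ℝ) := Nat.cast_nonneg i
    linarith
  rw [div_le_div_iff₀ hPrpos hGs1]
  calc ‖∏ i ∈ Finset.range m, (s + 1 + (i:ℂ))‖ * ‖Complex.Gamma (s + 1)‖
      = ‖Complex.Gamma (s + 1 + (m:ℂ))‖ := by rw [← norm_mul, ← hG1]
    _ ≤ Real.Gamma (σ + 1 + (m:ℝ)) := hle
    _ = Real.Gamma (σ + 1) * ∏ i ∈ Finset.range m, (σ + 1 + (i:ℝ)) := by rw [hG2]; ring
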